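/- arXiv:2506.18287 — 9 statements merged into one kernel-verified Lean document; each statement's English description precedes it below -/
import Mathlib

section
/- Let p be an odd prime and let x be a p-adic integer with m = ⟨x⟩_p ≤ (p-1)/2, and set t = (x - m)/p ∈ ℤ_p. Then for every integer k with 0 ≤ k ≤ m, one has C(x,k)·C(x+k,k) ≡ C(m,k)·C(m+k,k)·(1 + p·t·H_{m+k} - p·t·H_{m-k}) (mod p^2) in ℤ_p. -/
/-!
Write `x = m + c` with `c = p t`. The numerators of `C(x,k)` and `C(x+k,k)` interlock into the
single product `∏_{m-k < j ≤ m+k} (c + j)`, whose first-order expansion in `c` is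
`∏ j · (1 + c ∑ 1/j)` modulo `c² ℤ_p`, and `∑_{m-k < j ≤ m+k} 1/j = H_{m+k} - H_{m-k}`.
Dividing by `k!²`, a `p`-adic unit because `k ≤ m < p`, keeps the error in `p² ℤ_p`.
-/

/-- Generalized binomial coefficient `C(x,k) = x(x-1)⋯(x-k+1)/k!` in `ℚ_[p]`. -/
noncomputable def qchoose {p : ℕ} [Fact p.Prime] (x : ℚ_[p]) (k : ℕ) : ℚ_[p] :=
  (∏ i ∈ Finset.range k, (x - i)) / (k.factorial : ℚ_[p])

/-- The `n`-th harmonic number `H_n = ∑_{i=1}^n 1/i`, as an element of `ℚ_[p]`. -/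
noncomputable def hNum (p : ℕ) [Fact p.Prime] (n : ℕ) : ℚ_[p] :=
  ∑ i ∈ Finset.range n, ((i : ℚ_[p]) + 1)⁻¹

open Finset Polynomial

theorem Finset.sq_dvd_prod_add_sub {ι R : Type*} [CommRing R] [DecidableEq ι] (s : Finset ι)
    (a : ι → R) (c : R) :
    c ^ 2 ∣ ∏ j ∈ s, (c + a j) - (∏ j ∈ s, a j + c * ∑ j ∈ s, ∏ i ∈ s.erase j, a i) := by
  obtain ⟨r, hr⟩ := (∏ j ∈ s, (X + C (a j))).binomExpansion 0 c
  simp only [zero_add, eval_prod, eval_add, eval_X, eval_C, derivative_prod_finset,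
    derivative_add, derivative_X, derivative_C, add_zero, mul_one, eval_finsetSum] at hr
  exact ⟨r, by rw [hr]; ring⟩

theorem Finset.sum_prod_erase_eq_prod_mul_sum_inv {ι K : Type*} [Field K] [DecidableEq ι]
    {s : Finset ι} {a : ι → K} (ha : ∀ j ∈ s, a j ≠ 0) :
    ∑ j ∈ s, ∏ i ∈ s.erase j, a i = (∏ j ∈ s, a j) * ∑ j ∈ s, (a j)⁻¹ := by
  rw [mul_sum]
  refine sum_congr rfl fun j hj => ?_
  rw [← prod_erase_mul s a hj, mul_assoc, mul_inv_cancel₀ (ha j hj), mul_one]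

theorem Finset.prod_range_add_natCast_sub {R : Type*} [CommRing R] (y : R) {n k : ℕ}
    (hk : k ≤ n) : ∏ i ∈ range k, (y + n - i) = ∏ j ∈ Ioc (n - k) n, (y + j) := by
  induction k generalizing n with
  | zero => simp
  | succ k ih =>
    obtain ⟨n, rfl⟩ : ∃ n', n = n' + 1 := ⟨n - 1, by omega⟩
    rw [prod_range_succ', Nat.add_sub_add_right, prod_Ioc_succ_top (by omega), ← ih (by omega)]
    push_cast
    congr 1
    · exact prod_congr rfl fun i _ => by ring
    · ring

theorem Finset.prod_range_mul_prod_range_eq_prod_Ioc {R : Type*} [CommRing R] (y : R)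
    {m k : ℕ} (hk : k ≤ m) :
    (∏ i ∈ range k, (y + m - i)) * ∏ i ∈ range k, (y + (m + k : ℕ) - i) =
      ∏ j ∈ Ioc (m - k) (m + k), (y + j) := by
  rw [prod_range_add_natCast_sub y hk, prod_range_add_natCast_sub y (by omega : k ≤ m + k),
    Nat.add_sub_cancel, prod_Ioc_consecutive _ (Nat.sub_le m k) (Nat.le_add_right m k)]

theorem qchoose_mul_qchoose_add {p : ℕ} [Fact p.Prime] (y : ℚ_[p]) {m k : ℕ} (hk : k ≤ m) :
    qchoose (y + (m : ℚ_[p])) k * qchoose (y + (m : ℚ_[p]) + (k : ℚ_[p])) k =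
      (∏ j ∈ Ioc (m - k) (m + k), (y + (j : ℚ_[p]))) /
        ((k.factorial : ℚ_[p]) * (k.factorial : ℚ_[p])) := by
  rw [qchoose, qchoose, div_mul_div_comm, ← prod_range_mul_prod_range_eq_prod_Ioc y hk]
  push_cast
  simp only [add_assoc]

theorem hNum_eq_sum_Ioc (p : ℕ) [Fact p.Prime] (n : ℕ) :
    hNum p n = ∑ j ∈ Ioc 0 n, (j : ℚ_[p])⁻¹ := by
  rw [hNum, ← Ico_add_one_add_one_eq_Ioc, sum_Ico_eq_sum_range]
  simp [add_comm]

theorem sum_Ioc_inv_eq_hNum_sub (p : ℕ) [Fact p.Prime] {a b : ℕ} (hab : a ≤ b) :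
    ∑ j ∈ Ioc a b, (j : ℚ_[p])⁻¹ = hNum p b - hNum p a := by
  rw [hNum_eq_sum_Ioc, hNum_eq_sum_Ioc, ← sum_Ioc_consecutive _ (Nat.zero_le a) hab,
    add_sub_cancel_left]

theorem PadicInt.coe_prod {p : ℕ} [Fact p.Prime] {ι : Type*} (s : Finset ι) (f : ι → ℤ_[p]) :
    ((∏ i ∈ s, f i : ℤ_[p]) : ℚ_[p]) = ∏ i ∈ s, (f i : ℚ_[p]) :=
  map_prod PadicInt.Coe.ringHom f s

theorem PadicInt.norm_prod_add_natCast_sub_le {p : ℕ} [Fact p.Prime] (c : ℤ_[p])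
    {s : Finset ℕ} (hs : 0 ∉ s) :
    ‖∏ j ∈ s, ((c : ℚ_[p]) + j) - (∏ j ∈ s, (j : ℚ_[p])) * (1 + c * ∑ j ∈ s, (j : ℚ_[p])⁻¹)‖
      ≤ ‖c‖ ^ 2 := by
  obtain ⟨r, hr⟩ := sq_dvd_prod_add_sub s (fun j => (j : ℤ_[p])) c
  have hne : ∀ j ∈ s, (j : ℚ_[p]) ≠ 0 := fun j hj =>
    Nat.cast_ne_zero.mpr (ne_of_mem_of_not_mem hj hs)
  have hcast := congrArg ((↑) : ℤ_[p] → ℚ_[p]) hr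
  simp only [PadicInt.coe_sub, PadicInt.coe_add, PadicInt.coe_mul, PadicInt.coe_pow,
    PadicInt.coe_prod, PadicInt.coe_sum, PadicInt.coe_natCast] at hcast
  rw [sum_prod_erase_eq_prod_mul_sum_inv hne] at hcast
  calc _ = ‖(c : ℚ_[p]) ^ 2 * r‖ := by
        rw [← hcast]
        congr 1
        ring
    _ = ‖c‖ ^ 2 * ‖r‖ := by simp [PadicInt.padic_norm_e_of_padicInt]
    _ ≤ ‖c‖ ^ 2 := mul_le_of_le_one_right (by positivity) r.norm_le_one

theorem stmt1_general (p : ℕ) [Fact p.Prime] (x t : ℤ_[p]) (m : ℕ)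
    (hm : m ≤ (p - 1) / 2) (hx : x = (m : ℤ_[p]) + p * t) (k : ℕ) (hk : k ≤ m) :
    ‖qchoose (x : ℚ_[p]) k * qchoose ((x : ℚ_[p]) + (k : ℚ_[p])) k -
        qchoose (m : ℚ_[p]) k * qchoose ((m : ℚ_[p]) + (k : ℚ_[p])) k *
          (1 + (p : ℚ_[p]) * (t : ℚ_[p]) * hNum p (m + k)
            - (p : ℚ_[p]) * (t : ℚ_[p]) * hNum p (m - k))‖
      ≤ (p : ℝ) ^ (-2 : ℤ) := by
  have hp : p.Prime := Fact.out
  have hkp : k < p := by have := hp.pos; omega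
  have hfac : ‖(k.factorial : ℚ_[p])‖ = 1 :=
    Padic.norm_natCast_eq_one_iff.mpr <| (hp.coprime_iff_not_dvd).mpr fun h => by
      have := hp.dvd_factorial.mp h; omega
  set c : ℤ_[p] := p * t
  have hc : ‖c‖ ≤ (p : ℝ)⁻¹ := by
    simpa only [c, norm_mul, PadicInt.norm_p] using
      mul_le_of_le_one_right (by positivity) t.norm_le_one
  have hcq : (c : ℚ_[p]) = p * t := by simp only [c, PadicInt.coe_mul, PadicInt.coe_natCast]
  have hxq : (x : ℚ_[p]) = c + m := by rw [hx]; push_cast; ring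
  have hxm := qchoose_mul_qchoose_add (c : ℚ_[p]) hk
  have hmm := qchoose_mul_qchoose_add (0 : ℚ_[p]) hk
  simp only [zero_add] at hmm
  have hH := sum_Ioc_inv_eq_hNum_sub p (by omega : m - k ≤ m + k)
  calc _ = ‖∏ j ∈ Ioc (m - k) (m + k), ((c : ℚ_[p]) + j) -
          (∏ j ∈ Ioc (m - k) (m + k), (j : ℚ_[p])) *
            (1 + c * ∑ j ∈ Ioc (m - k) (m + k), (j : ℚ_[p])⁻¹)‖ := by
        rw [hxq, hxm, hmm, hH, ← hcq, div_mul_eq_mul_div, ← sub_div, norm_div, norm_mul, hfac,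
          mul_one, div_one]
        congr 2
        ring
    _ ≤ ‖c‖ ^ 2 := PadicInt.norm_prod_add_natCast_sub_le c (by simp)
    _ ≤ (p : ℝ)⁻¹ ^ 2 := pow_le_pow_left₀ (norm_nonneg _) hc 2
    _ = (p : ℝ) ^ (-2 : ℤ) := by rw [inv_pow, zpow_neg, zpow_ofNat]

/-- Let `p` be an odd prime, `x` a `p`-adic integer with `m = ⟨x⟩_p ≤ (p-1)/2` and
`t = (x - m)/p ∈ ℤ_p`. Then for `0 ≤ k ≤ m`,
`C(x,k) C(x+k,k) ≡ C(m,k) C(m+k,k) (1 + p t H_{m+k} - p t H_{m-k}) (mod p^2)`. -/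
theorem stmt1 (p : ℕ) [Fact p.Prime] (hp : Odd p) (x t : ℤ_[p]) (m : ℕ)
    (hm : m ≤ (p - 1) / 2) (hx : x = (m : ℤ_[p]) + p * t) (k : ℕ) (hk : k ≤ m) :
    ‖qchoose (x : ℚ_[p]) k * qchoose ((x : ℚ_[p]) + (k : ℚ_[p])) k -
        qchoose (m : ℚ_[p]) k * qchoose ((m : ℚ_[p]) + (k : ℚ_[p])) k *
          (1 + (p : ℚ_[p]) * (t : ℚ_[p]) * hNum p (m + k)
            - (p : ℚ_[p]) * (t : ℚ_[p]) * hNum p (m - k))‖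
      ≤ (p : ℝ) ^ (-2 : ℤ) :=
  stmt1_general p x t m hm hx k hk
end

section
/- Let p be an odd prime and let x be a p-adic integer with m = ⟨x⟩_p ≤ (p-1)/2, and set t = (x - m)/p ∈ ℤ_p. Then for every integer k with p - m ≤ k ≤ p - 1, one has C(x,k)·C(x+k,k) ≡ (-1)^m · p^2 · t·(t+1) / (k·(k-m)·C(m,p-k)·C(k,m)) (mod p^3) in ℤ_p, where the denominator is a p-adic unit. -/
/-!
Write `x = m + p t`. Among the factors `x - i` (`i < k`) of `C(x,k)` the one with `i = m` equals
`p t`, and among the factors `x + k - i` of `C(x+k,k)` the one with `i = m + k - p` equals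
`p (t + 1)`. Modulo `p` the products of the remaining factors are
`∏_{i ≠ n} (n - i) = ± n! (k-1-n)!` for `n = m` and `n = m + k - p`, and Wilson's theorem in the
form `j! (p-1-j)! ≡ (-1)^(j+1)` shows that their product times `k (k-m) C(m,p-k) C(k,m)` is
`(-1)^m k!²`. So `C(x,k) C(x+k,k)` is `p² t (t+1)` times a `p`-adic integer congruent to
`(-1)^m / (k (k-m) C(m,p-k) C(k,m))` modulo `p`.
-/

section

open Finset Nat

theorem prod_range_erase_natCast_sub {R : Type*} [CommRing R] {n k : ℕ} (h : n < k) :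
    ∏ i ∈ (range k).erase n, ((n : R) - i) = (-1) ^ (k - 1 - n) * n ! * (k - 1 - n)! := by
  induction k, h using Nat.le_induction with
  | base =>
    rw [range_add_one, erase_insert notMem_range_self, succ_sub_one, Nat.sub_self,
      ← prod_range_reflect, factorial_eq_prod_range_add_one]
    simp only [pow_zero, one_mul, factorial_zero, cast_one, mul_one, cast_prod, cast_add]
    refine prod_congr rfl fun i hi => ?_
    rw [mem_range] at hi
    rw [Nat.cast_sub (by omega), Nat.cast_sub (by omega)]
    ring
  | succ k hk ih =>
    obtain ⟨d, rfl⟩ : ∃ d, k = n + 1 + d := ⟨k - (n + 1), by omega⟩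
    rw [range_add_one, erase_insert_of_ne (by omega), prod_insert (by simp), ih,
      show n + 1 + d + 1 - 1 - n = d + 1 by omega, show n + 1 + d - 1 - n = d by omega]
    push_cast [factorial_succ]
    ring

theorem qchoose_coe_eq_mul_prod_erase {p : ℕ} [Fact p.Prime] (x : ℤ_[p]) {n k : ℕ} (h : n < k) :
    qchoose (x : ℚ_[p]) k =
      ((x - n) * ∏ i ∈ (range k).erase n, (x - i) : ℤ_[p]) / (k ! : ℚ_[p]) := by
  rw [qchoose, mul_prod_erase _ (fun i : ℕ => x - i) (mem_range.mpr h)]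
  congr 1
  exact (map_prod PadicInt.Coe.ringHom (fun i : ℕ => x - i) (range k)).symm

theorem qchoose_mul_qchoose_add_eq {p : ℕ} [Fact p.Prime] {x t : ℤ_[p]} {m k : ℕ}
    (hx : x = m + p * t) (hmk : m < k) (hmp : m < p) (hpk : p ≤ m + k) :
    qchoose (x : ℚ_[p]) k * qchoose ((x : ℚ_[p]) + (k : ℚ_[p])) k =
      (p : ℚ_[p]) ^ 2 * (t : ℚ_[p]) * ((t : ℚ_[p]) + 1) *
        ((((∏ i ∈ (range k).erase m, (x - i)) *
          ∏ i ∈ (range k).erase (m + k - p), (x + k - i) : ℤ_[p]) : ℚ_[p]) /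
            (k ! : ℚ_[p]) ^ 2) := by
  rw [qchoose_coe_eq_mul_prod_erase x hmk,
    show (x : ℚ_[p]) + k = ((x + k : ℤ_[p]) : ℚ_[p]) by push_cast; rfl,
    qchoose_coe_eq_mul_prod_erase _ (by omega : m + k - p < k),
    show x - m = p * t by rw [hx]; ring,
    show x + k - (m + k - p : ℕ) = p * (t + 1) by push_cast [Nat.cast_sub hpk, hx]; ring]
  push_cast
  ring

end

namespace ZMod

variable {p : ℕ} [Fact p.Prime]

open Nat

theorem natCast_factorial_ne_zero {n : ℕ} (hn : n < p) : (n ! : ZMod p) ≠ 0 := by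
  rw [Ne, natCast_eq_zero_iff, (Fact.out : p.Prime).dvd_factorial]
  omega

theorem factorial_mul_factorial_sub_one_sub {j : ℕ} (hj : j < p) :
    (j ! * (p - 1 - j)! : ZMod p) = (-1) ^ (j + 1) := by
  have h := congrArg (Nat.cast : ℕ → ZMod p) (factorial_mul_descFactorial (by omega : j ≤ p - 1))
  push_cast at h
  rw [cast_descFactorial hj.le, wilsons_lemma] at h
  have hsq : ((-1 : ZMod p) ^ j) ^ 2 = 1 := by rw [← pow_mul, pow_mul', neg_one_sq, one_pow]
  linear_combination (-1) ^ j * h - (j ! * (p - 1 - j)! : ZMod p) * hsq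

theorem prod_erase_mul_prod_erase_mul_choose (hp : Odd p) {m k : ℕ} (hmk : m < k) (hkp : k < p)
    (hpk : p ≤ m + k) :
    (∏ i ∈ (Finset.range k).erase m, ((m : ZMod p) - i)) *
        (∏ i ∈ (Finset.range k).erase (m + k - p), (((m + k - p : ℕ) : ZMod p) - i)) *
        (k * (k - m) * m.choose (p - k) * k.choose m) =
      (-1) ^ m * (k ! : ZMod p) ^ 2 := by
  rw [prod_range_erase_natCast_sub hmk, prod_range_erase_natCast_sub (by omega),
    show k - 1 - (m + k - p) = p - 1 - m by omega]
  have hchoose_k : ((k : ZMod p) - m) * k.choose m * (m ! * (k - 1 - m)!) = k ! := by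
    have h := choose_mul_factorial_mul_factorial hmk.le
    rw [show k - m = k - 1 - m + 1 by omega, factorial_succ] at h
    rw [← h]
    push_cast [Nat.cast_sub hmk.le, show k - 1 - m + 1 = k - m by omega]
    ring
  have hchoose_m : (m.choose (p - k) : ZMod p) * (p - k)! * (m + k - p)! = m ! := by
    have h := choose_mul_factorial_mul_factorial (show p - k ≤ m by omega)
    rw [show m - (p - k) = m + k - p by omega] at h
    rw [← h]
    push_cast
    rfl
  have hreflect : ((p - k)! : ZMod p) = -k * (p - 1 - k)! := by
    rw [show p - k = p - 1 - k + 1 by omega, factorial_succ]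
    push_cast [show p - 1 - k + 1 = p - k by omega, Nat.cast_sub hkp.le]
    simp
  have hsign :
      (-1 : ZMod p) ^ (k - 1 - m) * (-1) ^ (p - 1 - m) * (-1) ^ (m + 1) = (-1) ^ (m + k) := by
    rw [← pow_add, ← pow_add, neg_one_pow_eq_pow_mod_two, neg_one_pow_eq_pow_mod_two (m + k)]
    have := Nat.odd_iff.mp hp
    congr 1
    omega
  apply mul_right_cancel₀ (natCast_factorial_ne_zero (by omega : p - k < p))
  calc _ = (-1) ^ (k - 1 - m) * (-1) ^ (p - 1 - m) * k *
        (((k : ZMod p) - m) * k.choose m * (m ! * (k - 1 - m)!)) *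
        ((m.choose (p - k) : ZMod p) * (p - k)! * (m + k - p)! * (p - 1 - m)!) := by ring
    _ = (-1) ^ (k - 1 - m) * (-1) ^ (p - 1 - m) * (m ! * (p - 1 - m)!) * k * k ! := by
        rw [hchoose_k, hchoose_m]; ring
    _ = (-1) ^ (m + k) * k * k ! := by rw [factorial_mul_factorial_sub_one_sub (by omega), hsign]
    _ = _ := by
        rw [hreflect]
        linear_combination (-1) ^ m * k * (k ! : ZMod p) * factorial_mul_factorial_sub_one_sub hkp

end ZMod

namespace PadicInt

variable {p : ℕ} [Fact p.Prime]

theorem norm_lt_one_iff_toZMod_eq_zero (x : ℤ_[p]) : ‖x‖ < 1 ↔ toZMod x = 0 := by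
  rw [← RingHom.mem_ker, ker_toZMod, IsLocalRing.mem_maximalIdeal, mem_nonunits]

theorem norm_le_inv_of_toZMod_eq_zero {x : ℤ_[p]} (hx : toZMod x = 0) : ‖x‖ ≤ (p : ℝ)⁻¹ := by
  simpa using (norm_lt_pow_iff_norm_le_pow_sub_one x 0).mp
    (by simpa using (norm_lt_one_iff_toZMod_eq_zero x).mpr hx)

theorem norm_eq_one_of_toZMod_ne_zero {x : ℤ_[p]} (hx : toZMod x ≠ 0) : ‖x‖ = 1 :=
  (norm_le_one x).antisymm (not_lt.mp (mt (norm_lt_one_iff_toZMod_eq_zero x).mp hx))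

theorem norm_div_sub_div_le_inv {a b c d : ℤ_[p]} (hb : ‖b‖ = 1) (hd : ‖d‖ = 1)
    (h : toZMod (a * d) = toZMod (c * b)) : ‖(a / b - c / d : ℚ_[p])‖ ≤ (p : ℝ)⁻¹ := by
  have hb0 : (b : ℚ_[p]) ≠ 0 := ne_zero_of_norm_ne_zero (by simp [hb])
  have hd0 : (d : ℚ_[p]) ≠ 0 := ne_zero_of_norm_ne_zero (by simp [hd])
  rw [div_sub_div _ _ hb0 hd0, show (a * d - b * c : ℚ_[p]) = ((a * d - c * b : ℤ_[p]) : ℚ_[p]) by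
      push_cast; ring, norm_div, ← coe_mul, padic_norm_e_of_padicInt, padic_norm_e_of_padicInt,
    norm_mul, hb, hd, mul_one, div_one]
  exact norm_le_inv_of_toZMod_eq_zero (by rw [map_sub, h, sub_self])

theorem norm_p_sq_mul_mul_mul_le (t u : ℤ_[p]) {y : ℚ_[p]} (hy : ‖y‖ ≤ (p : ℝ)⁻¹) :
    ‖(p : ℚ_[p]) ^ 2 * t * u * y‖ ≤ (p : ℝ) ^ (-3 : ℤ) := by
  rw [norm_mul, norm_mul, norm_mul, norm_pow, Padic.norm_p, padic_norm_e_of_padicInt,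
    padic_norm_e_of_padicInt]
  calc (p : ℝ)⁻¹ ^ 2 * ‖t‖ * ‖u‖ * ‖y‖ ≤ (p : ℝ)⁻¹ ^ 2 * 1 * 1 * (p : ℝ)⁻¹ := by
        gcongr <;> exact norm_le_one _
    _ = (p : ℝ) ^ (-3 : ℤ) := by
        rw [zpow_neg, show (3 : ℤ) = ((3 : ℕ) : ℤ) from rfl, zpow_natCast]
        ring

end PadicInt

/-- Let `p` be an odd prime, `x` a `p`-adic integer with `m = ⟨x⟩_p ≤ (p-1)/2` and
`t = (x - m)/p ∈ ℤ_p`. Then for `p - m ≤ k ≤ p - 1`, the denominator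
`k (k - m) C(m, p-k) C(k, m)` is a `p`-adic unit and
`C(x,k) C(x+k,k) ≡ (-1)^m p^2 t (t+1) / (k (k-m) C(m,p-k) C(k,m)) (mod p^3)`. -/
theorem stmt2 (p : ℕ) [Fact p.Prime] (hp : Odd p) (x t : ℤ_[p]) (m : ℕ)
    (hm : m ≤ (p - 1) / 2) (hx : x = (m : ℤ_[p]) + p * t) (k : ℕ)
    (hk1 : p - m ≤ k) (hk2 : k ≤ p - 1) :
    ‖(k : ℚ_[p]) * ((k : ℚ_[p]) - (m : ℚ_[p])) * (m.choose (p - k) : ℚ_[p]) *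
        (k.choose m : ℚ_[p])‖ = 1 ∧
    ‖qchoose (x : ℚ_[p]) k * qchoose ((x : ℚ_[p]) + (k : ℚ_[p])) k -
        (-1) ^ m * (p : ℚ_[p]) ^ 2 * (t : ℚ_[p]) * ((t : ℚ_[p]) + 1) /
          ((k : ℚ_[p]) * ((k : ℚ_[p]) - (m : ℚ_[p])) * (m.choose (p - k) : ℚ_[p]) *
            (k.choose m : ℚ_[p]))‖
      ≤ (p : ℝ) ^ (-3 : ℤ) := by
  have hp2 : 2 ≤ p := (Fact.out : p.Prime).two_le
  have hmk : m < k := by omega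
  have hkp : k < p := by omega
  have hpk : p ≤ m + k := by omega
  rw [qchoose_mul_qchoose_add_eq hx hmk (by omega) hpk]
  set P : ℤ_[p] := (∏ i ∈ (Finset.range k).erase m, (x - i)) *
    ∏ i ∈ (Finset.range k).erase (m + k - p), (x + k - i)
  set D : ℤ_[p] := k * (k - m) * m.choose (p - k) * k.choose m
  have hres : PadicInt.toZMod (P * D) = PadicInt.toZMod ((-1) ^ m * (k.factorial ^ 2 : ℕ)) := by
    have hj : ((m + k - p : ℕ) : ZMod p) = m + k := by simp [Nat.cast_sub hpk]
    simpa [P, D, map_prod, hx, hj] using ZMod.prod_erase_mul_prod_erase_mul_choose hp hmk hkp hpk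
  have hfac : ‖((k.factorial ^ 2 : ℕ) : ℤ_[p])‖ = 1 :=
    PadicInt.norm_eq_one_of_toZMod_ne_zero (by simpa using ZMod.natCast_factorial_ne_zero hkp)
  have hD : ‖D‖ = 1 := PadicInt.norm_eq_one_of_toZMod_ne_zero fun h => by
    simp [h, ZMod.natCast_factorial_ne_zero hkp] at hres
  have hDq : (k : ℚ_[p]) * ((k : ℚ_[p]) - (m : ℚ_[p])) * (m.choose (p - k) : ℚ_[p]) *
      (k.choose m : ℚ_[p]) = (D : ℚ_[p]) := by simp [D]
  refine ⟨by rw [hDq, PadicInt.padic_norm_e_of_padicInt, hD], ?_⟩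
  rw [hDq, show ∀ a b c d : ℚ_[p], a ^ 2 * b * c * d - (-1) ^ m * a ^ 2 * b * c / D =
      a ^ 2 * b * c * (d - (-1) ^ m / D) by intros; ring]
  exact_mod_cast PadicInt.norm_p_sq_mul_mul_mul_le t (t + 1)
    (PadicInt.norm_div_sub_div_le_inv hfac hD hres)
end

section
/- For all nonnegative integers j and k, ∑_{n=0}^{j+k} ((-1)^n/(n+1)) · C(n,j) · C(j,n-k) = (-1)^{j+k} / ((j+k+1) · C(j+k,j)), as an identity of rational numbers. -/
/-- Binomial coefficient `C(a,b)` for `a : ℕ` and an integer `b`, which vanishes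
when `b < 0` or `b > a`. -/
def zchoose (a : ℕ) (b : ℤ) : ℕ := if 0 ≤ b then a.choose b.toNat else 0

/-!
Substituting `n = k + i`, the sum is `(-1)^(j+k)` times the `j`-th forward difference at `k`
of `f n = C(n,j)/(n+1)`. Since `C(-1,j) = (-1)^j`, the polynomial `C(x,j) - (-1)^j` is divisible
by `x + 1`, so `f n = (-1)^j/(n+1) + (a polynomial of degree < j)`. The `j`-th difference kills
the polynomial, and that of `1/(n+1)` is the discrete beta integral `(-1)^j j! k! / (j+k+1)!`.
-/

open Finset Nat
open scoped fwdDiff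

lemma zchoose_of_neg (a : ℕ) {b : ℤ} (hb : b < 0) : zchoose a b = 0 :=
  if_neg hb.not_ge

lemma zchoose_natCast (a b : ℕ) : zchoose a b = a.choose b := by
  simp [zchoose]

section Ring

variable {R : Type*} [Ring R]

lemma fwdDiff_iter_eq_sum_neg_one_pow_mul_choose (f : ℕ → R) (j k : ℕ) :
    Δ_[1] ^[j] f k = ∑ i ∈ range (j + 1), (-1) ^ (j - i) * j.choose i * f (k + i) := by
  simp [fwdDiff_iter_eq_sum_shift, zsmul_eq_mul]

lemma fwdDiff_natCast_choose_succ (t : ℕ) :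
    Δ_[1] (fun n : ℕ ↦ (n.choose (t + 1) : R)) = fun n ↦ (n.choose t : R) := by
  ext n
  simp [fwdDiff, choose_succ_succ']

lemma fwdDiff_iter_natCast_choose_of_lt {t j : ℕ} (h : t < j) :
    Δ_[1] ^[j] (fun n : ℕ ↦ (n.choose t : R)) = 0 := by
  induction j generalizing t with
  | zero => omega
  | succ j ih =>
    rw [Function.iterate_succ_apply]
    cases t with
    | zero =>
      simp only [choose_zero_right, cast_one, fwdDiff_const]
      exact Function.iterate_fixed (fwdDiff_const 1 0) j
    | succ t => rw [fwdDiff_natCast_choose_succ, ih (by omega)]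

end Ring

section Field

variable {K : Type*} [Field K] [CharZero K]

lemma fwdDiff_iter_inv_natCast_add_one (j k : ℕ) :
    Δ_[1] ^[j] (fun n : ℕ ↦ ((n : K) + 1)⁻¹) k = (-1) ^ j * (j ! * k ! / (j + k + 1)!) := by
  induction j generalizing k with
  | zero =>
    have : (k ! : K) ≠ 0 := cast_ne_zero.mpr k.factorial_ne_zero
    simp [factorial_succ, div_mul_cancel_right₀ this]
  | succ j ih =>
    rw [Function.iterate_succ_apply', fwdDiff, ih, ih, show j + (k + 1) + 1 = j + k + 1 + 1 by ring,
      show j + 1 + k + 1 = j + k + 1 + 1 by ring, factorial_succ (j + k + 1), factorial_succ j,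
      factorial_succ k]
    have : ((j + k + 1)! : K) ≠ 0 := cast_ne_zero.mpr (factorial_ne_zero _)
    have : ((j + k + 1 + 1 : ℕ) : K) ≠ 0 := cast_ne_zero.mpr (succ_ne_zero _)
    push_cast at *
    field_simp
    ring

-- From `∑_{t ≤ j} (-1)^t C(n+1,t) = (-1)^j C(n,j)` and `(n+1) C(n,t) = (t+1) C(n+1,t+1)`.
lemma natCast_choose_div_add_one (j n : ℕ) :
    (n.choose j : K) / (n + 1) =
      (-1) ^ j * ((n + 1 : K)⁻¹ + ∑ t ∈ range j, (-1) ^ (t + 1) / (t + 1) * (n.choose t : K)) := by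
  have hn : (n + 1 : K) ≠ 0 := by exact_mod_cast n.succ_ne_zero
  have hterm (t : ℕ) : (-1 : K) ^ (t + 1) * ((n + 1).choose (t + 1) : K) =
      (n + 1) * ((-1) ^ (t + 1) / (t + 1) * (n.choose t : K)) := by
    have ht : (t + 1 : K) ≠ 0 := by exact_mod_cast t.succ_ne_zero
    have := congrArg (Nat.cast (R := K)) (add_one_mul_choose_eq n t)
    push_cast at this
    rw [div_mul_eq_mul_div, mul_div_assoc', eq_div_iff ht]
    linear_combination -(-1 : K) ^ (t + 1) * this
  have h := congrArg (Int.cast (R := K))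
    (Int.alternating_sum_range_choose_eq_choose (n := n) (m := j))
  push_cast at h
  rw [sum_range_succ'] at h
  simp only [hterm, ← mul_sum, pow_zero, choose_zero_right, cast_one, mul_one] at h
  calc (n.choose j : K) / (n + 1) = (-1) ^ j * ((-1) ^ j * n.choose j) / (n + 1) := by
        rw [← mul_assoc, ← mul_pow, neg_one_mul, neg_neg, one_pow, one_mul]
    _ = _ := by
        rw [← h, mul_div_assoc, add_div, mul_div_cancel_left₀ _ hn, one_div, add_comm]

lemma fwdDiff_iter_natCast_choose_div_add_one (j k : ℕ) :
    Δ_[1] ^[j] (fun n : ℕ ↦ (n.choose j : K) / (n + 1)) k = j ! * k ! / (j + k + 1)! := by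
  have hf : (fun n : ℕ ↦ (n.choose j : K) / (n + 1)) = (-1 : K) ^ j •
      ((fun n : ℕ ↦ ((n : K) + 1)⁻¹) +
        ∑ t ∈ range j, ((-1 : K) ^ (t + 1) / (t + 1)) • fun n : ℕ ↦ (n.choose t : K)) := by
    ext n
    simp [natCast_choose_div_add_one]
  have hpoly : Δ_[1] ^[j] (∑ t ∈ range j,
      ((-1 : K) ^ (t + 1) / (t + 1)) • fun n : ℕ ↦ (n.choose t : K)) = 0 := by
    rw [fwdDiff_iter_finsetSum]
    refine sum_eq_zero fun t ht ↦ ?_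
    rw [fwdDiff_iter_const_smul, fwdDiff_iter_natCast_choose_of_lt (mem_range.mp ht), smul_zero]
  rw [hf, fwdDiff_iter_const_smul, fwdDiff_iter_add, hpoly, add_zero, Pi.smul_apply,
    fwdDiff_iter_inv_natCast_add_one, smul_eq_mul, ← mul_assoc, ← mul_pow, neg_one_mul, neg_neg,
    one_pow, one_mul]

lemma factorial_mul_factorial_div_factorial_succ (j k : ℕ) :
    (j ! * k ! / (j + k + 1)! : K) = 1 / ((j + k + 1) * (j + k).choose j) := by
  have : ((j + k)! : K) ≠ 0 := cast_ne_zero.mpr (factorial_ne_zero _)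
  rw [cast_add_choose, factorial_succ]
  push_cast
  field_simp

end Field

/-- For all nonnegative integers `j` and `k`,
`∑_{n=0}^{j+k} ((-1)^n/(n+1)) C(n,j) C(j,n-k) = (-1)^{j+k} / ((j+k+1) C(j+k,j))`. -/
theorem stmt4 (j k : ℕ) :
    ∑ n ∈ Finset.range (j + k + 1),
        ((-1 : ℚ) ^ n / ((n : ℚ) + 1)) * (n.choose j : ℚ) * (zchoose j ((n : ℤ) - k) : ℚ) =
      (-1 : ℚ) ^ (j + k) / (((j : ℚ) + k + 1) * ((j + k).choose j : ℚ)) := by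
  have hbelow : ∑ n ∈ range k,
      ((-1 : ℚ) ^ n / ((n : ℚ) + 1)) * (n.choose j : ℚ) * (zchoose j ((n : ℤ) - k) : ℚ) = 0 :=
    sum_eq_zero fun n hn ↦ by
      rw [zchoose_of_neg _ (by simpa using mem_range.mp hn), cast_zero, mul_zero]
  rw [show j + k + 1 = k + (j + 1) by ring, sum_range_add, hbelow, zero_add,
    div_eq_mul_one_div, ← factorial_mul_factorial_div_factorial_succ,
    ← fwdDiff_iter_natCast_choose_div_add_one, fwdDiff_iter_eq_sum_neg_one_pow_mul_choose, mul_sum]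
  refine sum_congr rfl fun i hi ↦ ?_
  have hij : i ≤ j := Nat.lt_succ_iff.mp (mem_range.mp hi)
  have hsign : (-1 : ℚ) ^ (k + i) = (-1) ^ (j + k) * (-1) ^ (j - i) := by
    rw [← pow_add, show j + k + (j - i) = k + i + 2 * (j - i) by omega, pow_add _ (k + i),
      pow_mul, neg_one_sq, one_pow, mul_one]
  rw [show ((k + i : ℕ) : ℤ) - k = i by push_cast; ring, zchoose_natCast, hsign]
  push_cast
  ring
end

section
/- For all nonnegative integers M and k, ∑_{j=0}^{M} (-1)^j · C(M,j) · C(M+j,j) / ((j+k+1) · C(j+k,j)) = C(k,M) / ((k+1) · C(M+k+1,M)), as an identity of rational numbers. (Here C(k,M) = 0 when k < M.) -/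
/-!
Each summand's factor `C(M,j) / ((j+k+1) C(j+k,j))` equals `C(M+k+1, M-j) / ((k+1) C(M+k+1, M))`,
which turns the sum into `∑ⱼ C(-(M+1), j) C(M+k+1, M-j) / ((k+1) C(M+k+1, M))`, since
`C(-(M+1), j) = (-1)^j C(M+j, j)`. By Vandermonde's convolution the numerator is
`C(-(M+1) + (M+k+1), M) = C(k, M)`.
-/

open Finset

theorem Ring.choose_neg_natCast_sub_one {R : Type*} [Ring R] [BinomialRing R] (n j : ℕ) :
    Ring.choose (-(n : R) - 1) j = (-1) ^ j * ((n + j).choose j : R) := by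
  rw [← neg_add', Ring.choose_neg, Units.smul_def, zsmul_eq_mul, Int.coe_negOnePow_natCast,
    Int.cast_pow, Int.cast_neg, Int.cast_one, add_right_comm, add_sub_cancel_right,
    ← Nat.cast_add, Ring.choose_natCast]

theorem sum_neg_one_pow_mul_choose_add_mul_choose (M k : ℕ) :
    ∑ j ∈ range (M + 1), (-1 : ℤ) ^ j * (M + j).choose j * (M + k + 1).choose (M - j) =
      k.choose M := by
  have h := Ring.add_choose_eq (r := -(M : ℤ) - 1) (s := ((M + k + 1 : ℕ) : ℤ)) M
    (Commute.all _ _)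
  rw [show -(M : ℤ) - 1 + ((M + k + 1 : ℕ) : ℤ) = (k : ℤ) by push_cast; ring,
    Ring.choose_natCast, Nat.sum_antidiagonal_eq_sum_range_succ_mk] at h
  rw [h]
  refine sum_congr rfl fun j _ => ?_
  rw [Ring.choose_neg_natCast_sub_one, Ring.choose_natCast]

theorem choose_mul_add_one_mul_choose {M j : ℕ} (k : ℕ) (hj : j ≤ M) :
    M.choose j * ((k + 1) * (M + k + 1).choose M) =
      (M + k + 1).choose (M - j) * ((j + k + 1) * (j + k).choose j) := by
  have hcross : (M + k + 1).choose M * M.choose (M - j) =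
      (M + k + 1).choose (M - j) * (j + k + 1).choose j := by
    rw [Nat.choose_mul (Nat.sub_le M j), Nat.sub_sub_self hj,
      show M + k + 1 - (M - j) = j + k + 1 by omega]
  have hsucc : (j + k + 1) * (j + k).choose j = (k + 1) * (j + k + 1).choose j := by
    rw [Nat.choose_symm_add, Nat.add_one_mul_choose_eq, Nat.choose_symm_of_eq_add (by ring)]
    ring
  rw [hsucc, ← Nat.choose_symm hj]
  linear_combination (k + 1) * hcross

theorem choose_div_add_one_mul_choose_eq {K : Type*} [Field K] [CharZero K] {M j : ℕ} (k : ℕ)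
    (hj : j ≤ M) :
    (M.choose j : K) / (((j : K) + k + 1) * ((j + k).choose j : K)) =
      ((M + k + 1).choose (M - j) : K) / (((k : K) + 1) * ((M + k + 1).choose M : K)) := by
  have hchoose {n i : ℕ} (h : i ≤ n) : (n.choose i : K) ≠ 0 :=
    Nat.cast_ne_zero.mpr (Nat.choose_pos h).ne'
  rw [div_eq_div_iff (mul_ne_zero (by exact_mod_cast (j + k).succ_ne_zero) (hchoose (by omega)))
    (mul_ne_zero (by exact_mod_cast k.succ_ne_zero) (hchoose (by omega)))]
  exact_mod_cast choose_mul_add_one_mul_choose k hj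

/-- For all nonnegative integers `M` and `k`,
`∑_{j=0}^{M} (-1)^j C(M,j) C(M+j,j) / ((j+k+1) C(j+k,j)) = C(k,M) / ((k+1) C(M+k+1,M))`. -/
theorem stmt5 (M k : ℕ) :
    ∑ j ∈ Finset.range (M + 1),
        (-1 : ℚ) ^ j * (M.choose j : ℚ) * ((M + j).choose j : ℚ) /
          (((j : ℚ) + k + 1) * ((j + k).choose j : ℚ)) =
      (k.choose M : ℚ) / (((k : ℚ) + 1) * ((M + k + 1).choose M : ℚ)) := by
  have hterm : ∀ j ∈ range (M + 1),
      (-1 : ℚ) ^ j * (M.choose j : ℚ) * ((M + j).choose j : ℚ) /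
          (((j : ℚ) + k + 1) * ((j + k).choose j : ℚ)) =
        (-1 : ℚ) ^ j * ((M + j).choose j : ℚ) * ((M + k + 1).choose (M - j) : ℚ) /
          (((k : ℚ) + 1) * ((M + k + 1).choose M : ℚ)) := fun j hj => by
    rw [mul_right_comm, mul_div_assoc, mul_div_assoc,
      choose_div_add_one_mul_choose_eq k (Nat.lt_succ_iff.mp (mem_range.mp hj))]
  rw [sum_congr rfl hterm, ← sum_div]
  congr 1
  exact_mod_cast sum_neg_one_pow_mul_choose_add_mul_choose M k
end

section
/- Let p be an odd prime. For every integer n with 0 ≤ n ≤ p - 1, one has C(p-1,n) ≡ (-1)^n · (1 - p·H_n) (mod p^2), as a congruence in ℤ_p (equivalently, in the ring of rationals with denominator prime to p). -/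
open Finset

theorem Nat.cast_choose_eq_prod_range {K : Type*} [Field K] [CharZero K] (m n : ℕ) :
    (m.choose n : K) = ∏ k ∈ range n, ((m : K) - k) / (k + 1) := by
  rw [Nat.cast_choose_eq_descPochhammer_div, descPochhammer_eval_eq_prod_range,
    ← prod_range_add_one_eq_factorial, Nat.cast_prod, ← prod_div_distrib]
  push_cast
  rfl

theorem Nat.cast_choose_sub_one_eq_neg_one_pow_mul_prod {K : Type*} [Field K] [CharZero K]
    {m : ℕ} (hm : 1 ≤ m) (n : ℕ) :
    ((m - 1).choose n : K) = (-1) ^ n * ∏ k ∈ range n, (1 - m * (k + 1 : K)⁻¹) := by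
  have hneg := prod_neg (s := range n) fun k : ℕ ↦ 1 - m * (k + 1 : K)⁻¹
  rw [card_range] at hneg
  rw [Nat.cast_choose_eq_prod_range, ← hneg]
  refine prod_congr rfl fun k _ ↦ ?_
  have : (k : K) + 1 ≠ 0 := by exact_mod_cast k.succ_ne_zero
  rw [Nat.cast_sub hm]
  field_simp
  ring

theorem norm_prod_one_sub_sub_one_sub_sum_le {ι R : Type*} [NormedCommRing R] [NormOneClass R]
    [IsUltrametricDist R] (s : Finset ι) (a : ι → R) {r : ℝ} (hr₀ : 0 ≤ r) (hr₁ : r ≤ 1)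
    (ha : ∀ i ∈ s, ‖a i‖ ≤ r) :
    ‖∏ i ∈ s, (1 - a i) - (1 - ∑ i ∈ s, a i)‖ ≤ r ^ 2 := by
  classical
  induction s using Finset.induction_on with
  | empty => simpa using pow_nonneg hr₀ 2
  | insert j s hj ih =>
    rw [prod_insert hj, sum_insert hj]
    have haj : ‖a j‖ ≤ r := ha j (mem_insert_self j s)
    have hsum : ‖∑ i ∈ s, a i‖ ≤ r :=
      IsUltrametricDist.norm_sum_le_of_forall_le_of_nonneg hr₀
        fun i hi ↦ ha i (mem_insert_of_mem hi)
    have hfactor : ‖1 - a j‖ ≤ 1 :=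
      calc ‖1 - a j‖ = ‖1 + -a j‖ := by rw [sub_eq_add_neg]
        _ ≤ max ‖(1 : R)‖ ‖-a j‖ := IsUltrametricDist.norm_add_le_max _ _
        _ ≤ 1 := by rw [norm_one, norm_neg]; exact max_le le_rfl (haj.trans hr₁)
    have hsplit : (1 - a j) * ∏ i ∈ s, (1 - a i) - (1 - (a j + ∑ i ∈ s, a i))
        = (1 - a j) * (∏ i ∈ s, (1 - a i) - (1 - ∑ i ∈ s, a i)) + a j * ∑ i ∈ s, a i := by
      ring
    rw [hsplit]
    refine (IsUltrametricDist.norm_add_le_max _ _).trans (max_le ?_ ?_)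
    · calc _ ≤ ‖1 - a j‖ * ‖∏ i ∈ s, (1 - a i) - (1 - ∑ i ∈ s, a i)‖ := norm_mul_le _ _
        _ ≤ 1 * r ^ 2 := by
          gcongr
          exact ih fun i hi ↦ ha i (mem_insert_of_mem hi)
        _ = r ^ 2 := one_mul _
    · calc _ ≤ ‖a j‖ * ‖∑ i ∈ s, a i‖ := norm_mul_le _ _
        _ ≤ r * r := by gcongr
        _ = r ^ 2 := (sq r).symm

theorem Padic.norm_natCast_eq_one_of_pos_of_lt {p : ℕ} [Fact p.Prime] {k : ℕ} (h₀ : 0 < k)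
    (hk : k < p) : ‖(k : ℚ_[p])‖ = 1 :=
  Padic.norm_natCast_eq_one_iff.2 <| Nat.coprime_of_lt_prime h₀.ne' hk Fact.out

theorem Padic.norm_p_mul_inv_succ {p : ℕ} [Fact p.Prime] {k : ℕ} (hk : k + 1 < p) :
    ‖(p : ℚ_[p]) * (k + 1 : ℚ_[p])⁻¹‖ = (p : ℝ)⁻¹ := by
  have hunit := Padic.norm_natCast_eq_one_of_pos_of_lt k.succ_pos hk
  push_cast at hunit
  rw [norm_mul, norm_inv, hunit, Padic.norm_p, inv_one, mul_one]

theorem stmt12_general (p : ℕ) [Fact p.Prime] (n : ℕ) (hn : n ≤ p - 1) :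
    ‖((p - 1).choose n : ℚ_[p]) - (-1) ^ n * (1 - (p : ℚ_[p]) * hNum p n)‖
      ≤ (p : ℝ) ^ (-2 : ℤ) := by
  have hp : p.Prime := Fact.out
  have hterm : ∀ k ∈ range n, ‖(p : ℚ_[p]) * (k + 1 : ℚ_[p])⁻¹‖ ≤ (p : ℝ)⁻¹ := fun k hk ↦
    (Padic.norm_p_mul_inv_succ (by rw [mem_range] at hk; omega)).le
  calc _ = ‖∏ k ∈ range n, (1 - p * (k + 1 : ℚ_[p])⁻¹)
          - (1 - ∑ k ∈ range n, p * (k + 1 : ℚ_[p])⁻¹)‖ := by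
        rw [Nat.cast_choose_sub_one_eq_neg_one_pow_mul_prod hp.one_le, hNum, mul_sum, ← mul_sub,
          norm_mul, norm_pow, norm_neg, norm_one, one_pow, one_mul]
    _ ≤ (p : ℝ)⁻¹ ^ 2 :=
        norm_prod_one_sub_sub_one_sub_sum_le _ _ (inv_nonneg.2 (Nat.cast_nonneg p))
          (inv_le_one_of_one_le₀ (by exact_mod_cast hp.one_le)) hterm
    _ = (p : ℝ) ^ (-2 : ℤ) := by rw [inv_pow, zpow_neg]; norm_cast

/-- Let `p` be an odd prime. For every `0 ≤ n ≤ p - 1`, one has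
`C(p-1,n) ≡ (-1)^n (1 - p H_n) (mod p^2)` in `ℤ_p`. -/
theorem stmt12 (p : ℕ) [Fact p.Prime] (hp : Odd p) (n : ℕ) (hn : n ≤ p - 1) :
    ‖((p - 1).choose n : ℚ_[p]) - (-1) ^ n * (1 - (p : ℚ_[p]) * hNum p n)‖
      ≤ (p : ℝ) ^ (-2 : ℤ) :=
  stmt12_general p n hn
end

section
/- For all nonnegative integers m and r with 0 ≤ r ≤ m, one has ∑_{j=r}^{m} C(m,j)·C(-m-1,j)·C(j,r) = (-1)^m · C(m,r) · C(m+r,m), as an identity of rational numbers, where C(-m-1,j) = (-m-1)(-m-2)⋯(-m-j)/j! is the generalized binomial coefficient. -/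
/-!
Since `C(-m-1, j) = (-1)^j C(m+j, j)` and `C(m,j) C(j,r) = C(m,r) C(m-r, j-r)`, the sum is
`(-1)^r C(m,r) ∑_k (-1)^k C(m-r, k) C(m+r+k, m)`. Up to the sign `(-1)^(m-r)` this alternating sum
is the `(m-r)`-th forward difference of `x ↦ C(x, m)` at `m+r`, which is `C(m+r, r)`.
-/

/-- Generalized binomial coefficient `C(x,k) = x(x-1)⋯(x-k+1)/k!` for rational `x`. -/
def rchoose (x : ℚ) (k : ℕ) : ℚ := (∏ i ∈ Finset.range k, (x - i)) / (k.factorial : ℚ)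

open Finset

lemma rchoose_neg_natCast_sub_one (m j : ℕ) :
    rchoose (-(m : ℚ) - 1) j = (-1) ^ j * ((m + j).choose j : ℚ) := by
  have hprod : ∏ i ∈ range j, (-(m : ℚ) - 1 - i) = (-1) ^ j * ((m + 1).ascFactorial j : ℚ) := by
    rw [Nat.ascFactorial_eq_prod_range, ← card_range j, ← prod_const, card_range]
    push_cast
    rw [← prod_mul_distrib]
    exact prod_congr rfl fun i _ ↦ by ring
  rw [rchoose, hprod, Nat.ascFactorial_eq_factorial_mul_choose]
  push_cast
  field_simp

lemma sum_range_neg_one_pow_mul_choose_mul_choose_add {n m : ℕ} (a : ℕ) (h : n ≤ m) :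
    ∑ k ∈ range (n + 1), (-1 : ℤ) ^ k * n.choose k * (a + k).choose m =
      (-1) ^ n * a.choose (m - n) := by
  obtain ⟨d, rfl⟩ := Nat.exists_eq_add_of_le h
  have hdiff := fwdDiff_iter_eq_sum_shift 1 (fun x ↦ x.choose (n + d) : ℕ → ℤ) n a
  simp only [fwdDiff_iter_choose, smul_eq_mul, mul_one] at hdiff
  rw [Nat.add_sub_cancel_left, hdiff, mul_sum]
  refine sum_congr rfl fun k hk ↦ ?_
  have hkn : k ≤ n := Nat.lt_succ_iff.mp (mem_range.mp hk)
  rw [← mul_assoc, ← mul_assoc, ← pow_add,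
    show n + (n - k) = k + 2 * (n - k) by omega, pow_add, pow_mul]
  simp

lemma choose_mul_rchoose_mul_choose (m r k : ℕ) :
    (m.choose (r + k) : ℚ) * rchoose (-(m : ℚ) - 1) (r + k) * ((r + k).choose r : ℚ) =
      (-1) ^ r * m.choose r * ((-1) ^ k * (m - r).choose k * (m + r + k).choose m) := by
  have hchoose : (m.choose (r + k) : ℚ) * (r + k).choose r = m.choose r * (m - r).choose k := by
    exact_mod_cast by simpa using Nat.choose_mul (n := m) (Nat.le_add_right r k)
  have hsymm : (m + (r + k)).choose (r + k) = (m + r + k).choose m := by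
    rw [add_comm m, Nat.choose_symm_add, add_right_comm, add_comm r m]
  rw [rchoose_neg_natCast_sub_one, hsymm, pow_add]
  linear_combination (-1 : ℚ) ^ r * (-1) ^ k * ((m + r + k).choose m : ℚ) * hchoose

/-- For all nonnegative integers `m` and `r` with `r ≤ m`,
`∑_{j=r}^{m} C(m,j) C(-m-1,j) C(j,r) = (-1)^m C(m,r) C(m+r,m)` in `ℚ`. -/
theorem stmt14 (m r : ℕ) (h : r ≤ m) :
    ∑ j ∈ Finset.Icc r m,
        (m.choose j : ℚ) * rchoose (-(m : ℚ) - 1) j * (j.choose r : ℚ) =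
      (-1 : ℚ) ^ m * (m.choose r : ℚ) * ((m + r).choose m : ℚ) := by
  rw [← Ico_add_one_right_eq_Icc, sum_Ico_eq_sum_range, show m + 1 - r = m - r + 1 by omega,
    sum_congr rfl fun k _ ↦ choose_mul_rchoose_mul_choose m r k, ← mul_sum]
  have hdiff : ∑ k ∈ range (m - r + 1), (-1 : ℚ) ^ k * (m - r).choose k * (m + r + k).choose m =
      (-1) ^ (m - r) * (m + r).choose m := by
    have := sum_range_neg_one_pow_mul_choose_mul_choose_add (m + r) (Nat.sub_le m r)
    rw [Nat.sub_sub_self h, ← Nat.choose_symm_add] at this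
    exact_mod_cast this
  have hsign : (-1 : ℚ) ^ m = (-1) ^ r * (-1) ^ (m - r) := by
    rw [← pow_add, Nat.add_sub_cancel' h]
  rw [hdiff, hsign]
  ring
end

section
/- For all positive integers M and N with M ≤ N - 1, one has ∑_{k=M}^{N-1} C(k-1,M-1)/(N-k) = C(N-1,M-1) · ∑_{k=M}^{N-1} 1/k, as an identity of rational numbers. -/
/-!
Write `H n` for the `n`-th harmonic number. Extending the sum over all `j < n` (the missing terms
vanish), both `S(n, m) = ∑_{j<n} C(j, m)/(n - j)` and `C(n, m) (H n - H m)` satisfy Pascal's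
recurrence `S(n+1, m+1) = S(n, m) + S(n, m+1)`, together with `S(n+1, 0) = S(n, 0) + 1/(n+1)`.
For the right-hand side the recurrence reduces to `(n+1) C(n, m) = (m+1) C(n+1, m+1)`.
-/

open Finset

theorem sum_range_choose_div_sub (n m : ℕ) :
    ∑ j ∈ range n, (j.choose m : ℚ) / (n - j) = n.choose m * (harmonic n - harmonic m) := by
  induction n generalizing m with
  | zero => cases m <;> simp
  | succ n ih =>
    have hshift (j : ℕ) : ((n + 1 : ℕ) : ℚ) - ((j + 1 : ℕ) : ℚ) = n - j := by push_cast; ring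
    rw [sum_range_succ']
    simp only [hshift]
    cases m with
    | zero => simpa using ih 0
    | succ m =>
      have hpascal : ((n : ℚ) + 1) * n.choose m = (n.choose m + n.choose (m + 1)) * (m + 1) := by
        exact_mod_cast Nat.choose_succ_succ n m ▸ Nat.add_one_mul_choose_eq n m
      simp only [Nat.choose_succ_succ, Nat.cast_add, add_div, sum_add_distrib, ih m, ih (m + 1),
        Nat.choose_zero_succ, Nat.cast_zero, zero_div, add_zero, harmonic_succ, Nat.cast_succ]
      field_simp
      linear_combination hpascal

theorem sum_Icc_choose_pred_div_eq_sum_range (m n : ℕ) :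
    ∑ k ∈ Icc (m + 1) n, ((k - 1).choose m : ℚ) / ((n + 1 : ℕ) - k : ℚ) =
      ∑ j ∈ range n, (j.choose m : ℚ) / (n - j) := by
  rw [← Ico_add_one_right_eq_Icc, ← sum_Ico_add', range_eq_Ico]
  refine sum_subset_zero_on_sdiff (Ico_subset_Ico_left m.zero_le) (fun j hj => ?_) (fun j _ => ?_)
  · have hjm : j < m := by simp only [mem_sdiff, mem_Ico] at hj; omega
    simp [Nat.choose_eq_zero_of_lt hjm]
  · push_cast
    simp

theorem sum_Icc_inv_eq_harmonic_sub {m n : ℕ} (h : m ≤ n) :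
    ∑ k ∈ Icc (m + 1) n, (k : ℚ)⁻¹ = harmonic n - harmonic m := by
  induction n, h using Nat.le_induction with
  | base => simp
  | succ n _ ih => rw [sum_Icc_succ_top (by omega), ih, harmonic_succ]; ring

theorem stmt15_general (M N : ℕ) (hM : 0 < M) :
    ∑ k ∈ Finset.Icc M (N - 1), ((k - 1).choose (M - 1) : ℚ) / ((N : ℚ) - (k : ℚ)) =
      ((N - 1).choose (M - 1) : ℚ) * ∑ k ∈ Finset.Icc M (N - 1), (1 : ℚ) / (k : ℚ) := by
  obtain ⟨m, rfl⟩ := Nat.exists_eq_add_one_of_ne_zero hM.ne'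
  cases N with
  | zero => simp
  | succ n =>
    simp only [Nat.add_sub_cancel, one_div]
    rw [sum_Icc_choose_pred_div_eq_sum_range, sum_range_choose_div_sub]
    rcases le_or_gt m n with hmn | hnm
    · rw [sum_Icc_inv_eq_harmonic_sub hmn]
    · simp [Nat.choose_eq_zero_of_lt hnm]

/-- For all positive integers `M` and `N` with `M ≤ N - 1`,
`∑_{k=M}^{N-1} C(k-1,M-1)/(N-k) = C(N-1,M-1) ∑_{k=M}^{N-1} 1/k` in `ℚ`. -/
theorem stmt15 (M N : ℕ) (hM : 0 < M) (hN : 0 < N) (h : M ≤ N - 1) :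
    ∑ k ∈ Finset.Icc M (N - 1), ((k - 1).choose (M - 1) : ℚ) / ((N : ℚ) - (k : ℚ)) =
      ((N - 1).choose (M - 1) : ℚ) * ∑ k ∈ Finset.Icc M (N - 1), (1 : ℚ) / (k : ℚ) :=
  stmt15_general M N hM
end

section
/- For all nonnegative integers N and positive integers b, c with b ≥ c > 0, one has ∑_{k=0}^{N} (-1)^k · C(N,k) / C(b+k,c) = c / ((N+c) · C(N+b,b-c)), as an identity of rational numbers. -/
/-!
With `f_c n = 1 / C(n, c)`, the sum is the `N`-th alternating binomial difference of `f_c` at `b`.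
One difference step turns `f_c` into a multiple of `f_{c+1}` shifted by one:
`1 / C(n, c) - 1 / C(n + 1, c) = c / (c + 1) · 1 / C(n + 1, c + 1)`.
Induction on `N` therefore passes from `(b, c)` to `(b + 1, c + 1)` at the cost of a factor
`c / (c + 1)`, and the base case `N = 0` is `1 / C(b, c) = c / (c · C(b, b - c))`.
-/

open Finset

theorem sum_range_succ_neg_one_pow_mul_choose_succ {R : Type*} [CommRing R] (N : ℕ)
    (f : ℕ → R) :
    ∑ k ∈ range (N + 2), (-1) ^ k * ((N + 1).choose k : R) * f k =
      ∑ k ∈ range (N + 1), (-1) ^ k * (N.choose k : R) * (f k - f (k + 1)) := by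
  have pascal : ∑ k ∈ range (N + 1), (-1) ^ (k + 1) * ((N + 1).choose (k + 1) : R) * f (k + 1) =
      ∑ k ∈ range (N + 1), (-1) ^ (k + 1) * (N.choose (k + 1) : R) * f (k + 1) -
        ∑ k ∈ range (N + 1), (-1) ^ k * (N.choose k : R) * f (k + 1) := by
    rw [← sum_sub_distrib]
    refine sum_congr rfl fun k _ => ?_
    rw [Nat.choose_succ_succ]
    push_cast
    ring
  have top_vanishes : ∑ k ∈ range (N + 2), (-1) ^ k * (N.choose k : R) * f k =
      ∑ k ∈ range (N + 1), (-1) ^ k * (N.choose k : R) * f k := by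
    rw [sum_range_succ, Nat.choose_succ_self, Nat.cast_zero, mul_zero, zero_mul, add_zero]
  simp only [mul_sub, sum_sub_distrib]
  rw [sum_range_succ', pascal, ← top_vanishes, sum_range_succ' _ (N + 1)]
  simp only [pow_zero, Nat.choose_zero_right, Nat.cast_one, one_mul]
  ring

theorem inv_choose_sub_inv_choose_succ {K : Type*} [Field K] [CharZero K] {n c : ℕ}
    (hcn : c ≤ n) :
    ((n.choose c : K))⁻¹ - ((n + 1).choose c : K)⁻¹ =
      c / (c + 1) * ((n + 1).choose (c + 1) : K)⁻¹ := by
  have hx : (n.choose c : K) ≠ 0 := by exact_mod_cast (Nat.choose_pos hcn).ne'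
  have hy : ((n + 1).choose c : K) ≠ 0 := by exact_mod_cast (Nat.choose_pos (by omega)).ne'
  have hz : ((n + 1).choose (c + 1) : K) ≠ 0 := by exact_mod_cast (Nat.choose_pos (by omega)).ne'
  have hxy : (n.choose c : K) * (n + 1) = (n + 1).choose c * (n + 1 - c) := by
    have := congrArg (Nat.cast : ℕ → K) (Nat.choose_mul_succ_eq n c)
    push_cast [Nat.cast_sub (show c ≤ n + 1 by omega)] at this
    exact this
  have hzy : ((n + 1).choose (c + 1) : K) * (c + 1) = (n + 1).choose c * (n + 1 - c) := by
    have := congrArg (Nat.cast : ℕ → K) (Nat.choose_succ_right_eq (n + 1) c)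
    push_cast [Nat.cast_sub (show c ≤ n + 1 by omega)] at this
    exact this
  field_simp
  linear_combination ((n + 1).choose c - n.choose c : K) * hzy - ((n + 1).choose c : K) * hxy

theorem sum_neg_one_pow_mul_choose_div_choose (N : ℕ) {b c : ℕ} (hc : 0 < c) (hcb : c ≤ b) :
    ∑ k ∈ range (N + 1), (-1 : ℚ) ^ k * (N.choose k : ℚ) / ((b + k).choose c : ℚ) =
      (c : ℚ) / (((N : ℚ) + c) * ((N + b).choose (b - c) : ℚ)) := by
  induction N generalizing b c with
  | zero =>
    have hC : (b.choose c : ℚ) ≠ 0 := by exact_mod_cast (Nat.choose_pos hcb).ne'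
    have hc' : (c : ℚ) ≠ 0 := by exact_mod_cast hc.ne'
    simp only [zero_add, range_one, sum_singleton, pow_zero, Nat.choose_self, Nat.cast_one,
      mul_one, add_zero, one_div, CharP.cast_eq_zero, Nat.choose_symm hcb]
    field_simp
  | succ N ih =>
    have difference (k : ℕ) : ((b + k).choose c : ℚ)⁻¹ - ((b + (k + 1)).choose c : ℚ)⁻¹ =
        c / (c + 1) * ((b + 1 + k).choose (c + 1) : ℚ)⁻¹ := by
      rw [← add_assoc, add_right_comm b 1 k]
      exact inv_choose_sub_inv_choose_succ (by omega)
    have shifted := ih (b := b + 1) (c := c + 1) (by omega) (by omega)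
    simp only [div_eq_mul_inv] at shifted ⊢
    rw [sum_range_succ_neg_one_pow_mul_choose_succ N (fun k => ((b + k).choose c : ℚ)⁻¹)]
    simp only [difference, mul_left_comm _ ((c : ℚ) / (c + 1)), ← mul_sum, shifted]
    rw [Nat.add_sub_add_right, show N + (b + 1) = N + 1 + b by omega]
    push_cast
    field_simp
    ring

/-- For all nonnegative integers `N` and positive integers `b ≥ c > 0`,
`∑_{k=0}^{N} (-1)^k C(N,k) / C(b+k,c) = c / ((N+c) C(N+b,b-c))` in `ℚ`. -/
theorem stmt16 (N b c : ℕ) (hc : 0 < c) (hbc : c ≤ b) :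
    ∑ k ∈ Finset.range (N + 1), (-1 : ℚ) ^ k * (N.choose k : ℚ) / ((b + k).choose c : ℚ) =
      (c : ℚ) / (((N : ℚ) + c) * ((N + b).choose (b - c) : ℚ)) :=
  sum_neg_one_pow_mul_choose_div_choose N hc hbc
end

section
/- Let p be an odd prime and let m be a nonnegative integer with m < (p-1)/2. Then for every integer j with m + 1 ≤ j ≤ p - m - 2, one has ∑_{k=p-1-j}^{p-m-1} C(m+k,k)·C(k,p-1-j) / ((k-m)·C(k,m)) ≡ (-1)^j · C(p-m-1,j-m) / ((j+1)·C(p-m-1,j+1)) (mod p), as a congruence of p-integral rational numbers. -/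
/-!
Everything is reduced modulo `p`. Substituting `k = p - 1 - t` and using
`C(p - 1 - a, r) ≡ (-1)^r C(a + r, r)`, the sum becomes
`-∑_{m ≤ t ≤ j} (-1)^(j-t) C(j,t) C(t,m) B(t,m)`, where `B(a, b) = a! b! / (a + b + 1)!` is the
Beta integral `∫₀¹ xᵃ (1 - x)ᵇ dx`. As `C(j,t) C(t,m) = C(j,m) C(j-m,t-m)`, this is `C(j,m)` times
the `(j-m)`-th forward difference of `a ↦ B(a, m)` at `m`, and the rule
`B(a+1, b) + B(a, b+1) = B(a, b)` gives `Δⁿ B(·, b) = (-1)ⁿ B(·, b + n)`. The resulting identity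
holds over every field of characteristic zero, and it descends to `ZMod p` because all of its
denominators are products of integers in `(0, p)`.
-/

open Finset Nat

section FactorialBeta

variable (K : Type*) [Field K]

def factorialBeta (a b : ℕ) : K := (a ! * b ! : K) / (a + b + 1)!

variable {K} [CharZero K]

theorem factorialBeta_eq_inv (a b : ℕ) :
    factorialBeta K a b = ((((a + b + 1) * (a + b).choose b : ℕ) : K))⁻¹ := by
  have h := Nat.choose_mul_factorial_mul_factorial (Nat.le_add_left b a)
  rw [Nat.add_sub_cancel] at h
  have ha : (a ! : K) ≠ 0 := mod_cast a.factorial_ne_zero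
  have hb : (b ! : K) ≠ 0 := mod_cast b.factorial_ne_zero
  rw [factorialBeta, Nat.factorial_succ, ← h]
  push_cast
  field_simp

theorem factorialBeta_succ_left_add_succ_right (a b : ℕ) :
    factorialBeta K (a + 1) b + factorialBeta K a (b + 1) = factorialBeta K a b := by
  simp only [factorialBeta, show a + 1 + b + 1 = a + b + 1 + 1 by ring,
    show a + (b + 1) + 1 = a + b + 1 + 1 by ring, Nat.factorial_succ]
  have h : ((a + b)! : K) ≠ 0 := mod_cast (a + b).factorial_ne_zero
  have h1 : ((a + b + 1 : ℕ) : K) ≠ 0 := Nat.cast_ne_zero.mpr (by omega)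
  have h2 : ((a + b + 1 + 1 : ℕ) : K) ≠ 0 := Nat.cast_ne_zero.mpr (by omega)
  push_cast at h1 h2 ⊢
  field_simp
  ring

theorem fwdDiff_iter_factorialBeta (n b : ℕ) :
    (fwdDiff 1)^[n] (fun a => factorialBeta K a b) =
      fun a => (-1 : K) ^ n * factorialBeta K a (b + n) := by
  induction n generalizing b with
  | zero => simp
  | succ n ih =>
    have hΔ : fwdDiff 1 (fun a => factorialBeta K a b) =
        (-1 : K) • fun a => factorialBeta K a (b + 1) := by
      ext a
      simp [fwdDiff, ← factorialBeta_succ_left_add_succ_right a b]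
    rw [Function.iterate_succ_apply, hΔ, fwdDiff_iter_const_smul, ih]
    ext a
    simp [pow_succ, add_assoc, add_comm 1 n]

theorem sum_alternating_choose_mul_factorialBeta (J m : ℕ) :
    ∑ k ∈ range (J + 1), (-1 : K) ^ (J - k) * J.choose k * factorialBeta K (m + k) m =
      (-1) ^ J * factorialBeta K m (m + J) := by
  have h := congrFun (fwdDiff_iter_factorialBeta (K := K) J m) m
  rw [fwdDiff_iter_eq_sum_shift] at h
  simpa using h

theorem sum_Icc_neg_one_pow_mul_choose_div {m j : ℕ} (hmj : m ≤ j) :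
    ∑ t ∈ Icc m j, (-1 : K) ^ (j - t) * ((j.choose t * t.choose m : ℕ) : K) /
        (((t + m + 1) * (t + m).choose m : ℕ) : K) =
      (-1) ^ (j - m) * (j.choose m : K) / (((j + 1) * (m + j + 1).choose (j + 1) : ℕ) : K) := by
  obtain ⟨J, rfl⟩ := Nat.exists_eq_add_of_le hmj
  have hterm : ∀ k ∈ range (J + 1),
      (-1 : K) ^ (m + J - (m + k)) * (((m + J).choose (m + k) * (m + k).choose m : ℕ) : K) /
          (((m + k + m + 1) * (m + k + m).choose m : ℕ) : K) =
        ((m + J).choose m : K) * ((-1) ^ (J - k) * J.choose k * factorialBeta K (m + k) m) := by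
    intro k _
    rw [Nat.choose_mul (Nat.le_add_right m k), factorialBeta_eq_inv, Nat.add_sub_cancel_left,
      Nat.add_sub_cancel_left, Nat.add_sub_add_left]
    push_cast
    ring
  have hden : (m + J + 1) * (m + (m + J) + 1).choose (m + J + 1) =
      (m + (m + J) + 1) * (m + (m + J)).choose (m + J) := by
    rw [Nat.add_one_mul_choose_eq, mul_comm]
  rw [← Ico_add_one_right_eq_Icc, sum_Ico_eq_sum_range,
    show m + J + 1 - m = J + 1 by omega, Nat.add_sub_cancel_left, sum_congr rfl hterm, ← mul_sum,
    sum_alternating_choose_mul_factorialBeta, factorialBeta_eq_inv, hden]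
  ring

end FactorialBeta

namespace ZMod

theorem natCast_ne_zero_of_pos_of_lt {p n : ℕ} (h0 : 0 < n) (h : n < p) : (n : ZMod p) ≠ 0 := by
  rw [Ne, natCast_eq_zero_iff]
  exact fun hdvd => absurd (Nat.le_of_dvd h0 hdvd) (by omega)

variable {p : ℕ} [Fact p.Prime]

theorem natCast_choose_ne_zero {n k : ℕ} (hk : k ≤ n) (hn : n < p) :
    (n.choose k : ZMod p) ≠ 0 := by
  rw [Ne, natCast_eq_zero_iff, ← (Fact.out : p.Prime).coprime_iff_not_dvd]
  exact (Fact.out : p.Prime).coprime_choose_of_lt hn hk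

theorem natCast_choose_sub_one_sub {a r : ℕ} (h : a + r < p) :
    ((p - 1 - a).choose r : ZMod p) = (-1) ^ r * ((a + r).choose r : ℕ) := by
  have hr : (r ! : ZMod p) ≠ 0 := by
    rw [Ne, natCast_eq_zero_iff, (Fact.out : p.Prime).dvd_factorial]
    omega
  have hcast : ((p - 1 - a : ℕ) : ZMod p) - r + 1 = -((a + r : ℕ) : ZMod p) := by
    rw [Nat.cast_sub (by omega), Nat.cast_sub (by omega), natCast_self]
    push_cast
    ring
  apply mul_left_cancel₀ hr
  rw [← Nat.cast_mul, ← descFactorial_eq_factorial_mul_choose,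
    ← descPochhammer_eval_eq_descFactorial, descPochhammer_eval_eq_ascPochhammer, hcast,
    ascPochhammer_eval_neg_eq_descPochhammer,
    descPochhammer_eval_eq_descFactorial, descFactorial_eq_factorial_mul_choose, Nat.cast_mul]
  ring

end ZMod

namespace Padic

variable {p : ℕ} [Fact p.Prime]

def HasResidue (x : ℚ_[p]) (r : ZMod p) : Prop :=
  ∃ z : ℤ_[p], (z : ℚ_[p]) = x ∧ PadicInt.toZMod z = r

namespace HasResidue

variable {x y : ℚ_[p]} {r s : ZMod p}

theorem natCast (n : ℕ) : HasResidue (n : ℚ_[p]) (n : ZMod p) :=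
  ⟨n, by simp, map_natCast _ n⟩

theorem one : HasResidue (1 : ℚ_[p]) 1 :=
  ⟨1, by simp, map_one _⟩

theorem neg (hx : HasResidue x r) : HasResidue (-x) (-r) := by
  obtain ⟨z, rfl, rfl⟩ := hx
  exact ⟨-z, by simp, map_neg _ z⟩

theorem add (hx : HasResidue x r) (hy : HasResidue y s) : HasResidue (x + y) (r + s) := by
  obtain ⟨z, rfl, rfl⟩ := hx
  obtain ⟨w, rfl, rfl⟩ := hy
  exact ⟨z + w, by simp, map_add _ z w⟩

theorem sub (hx : HasResidue x r) (hy : HasResidue y s) : HasResidue (x - y) (r - s) := by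
  obtain ⟨z, rfl, rfl⟩ := hx
  obtain ⟨w, rfl, rfl⟩ := hy
  exact ⟨z - w, by simp, map_sub _ z w⟩

theorem mul (hx : HasResidue x r) (hy : HasResidue y s) : HasResidue (x * y) (r * s) := by
  obtain ⟨z, rfl, rfl⟩ := hx
  obtain ⟨w, rfl, rfl⟩ := hy
  exact ⟨z * w, by simp, map_mul _ z w⟩

theorem pow (hx : HasResidue x r) (n : ℕ) : HasResidue (x ^ n) (r ^ n) := by
  obtain ⟨z, rfl, rfl⟩ := hx
  exact ⟨z ^ n, by simp, map_pow _ z n⟩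

theorem div (hx : HasResidue x r) (hy : HasResidue y s) (hs : s ≠ 0) :
    HasResidue (x / y) (r / s) := by
  obtain ⟨z, rfl, rfl⟩ := hx
  obtain ⟨w, rfl, rfl⟩ := hy
  have hw : IsUnit w := by
    by_contra h
    exact hs (by rwa [← RingHom.mem_ker, PadicInt.ker_toZMod, IsLocalRing.mem_maximalIdeal])
  refine ⟨z * ↑hw.unit⁻¹, ?_, ?_⟩
  · rw [PadicInt.coe_mul, div_eq_mul_inv]
    congr 1
    exact map_units_inv (PadicInt.Coe.ringHom (p := p)) hw.unit
  · rw [map_mul, div_eq_mul_inv]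
    congr 1
    exact map_units_inv PadicInt.toZMod hw.unit

theorem sum {ι : Type*} {t : Finset ι} {f : ι → ℚ_[p]} {g : ι → ZMod p}
    (h : ∀ i ∈ t, HasResidue (f i) (g i)) : HasResidue (∑ i ∈ t, f i) (∑ i ∈ t, g i) := by
  classical
  induction t using Finset.induction_on with
  | empty => exact ⟨0, by simp, by simp⟩
  | insert i t hi ih =>
    rw [sum_insert hi, sum_insert hi]
    exact (h i (mem_insert_self i t)).add (ih fun k hk => h k (mem_insert_of_mem hk))

theorem neg_one_pow_mul_natCast_div (n a b : ℕ) (hb : (b : ZMod p) ≠ 0) :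
    HasResidue ((-1) ^ n * a / b : ℚ_[p]) ((-1) ^ n * a / b) :=
  (one.neg.pow n |>.mul (natCast a)).div (natCast b) hb

theorem unique (hr : HasResidue x r) (hs : HasResidue x s) : r = s := by
  obtain ⟨z, rfl, rfl⟩ := hr
  obtain ⟨w, hw, rfl⟩ := hs
  rw [Subtype.ext hw]

theorem norm_le_inv (hx : HasResidue x 0) : ‖x‖ ≤ (p : ℝ)⁻¹ := by
  obtain ⟨z, rfl, hz⟩ := hx
  have hz' : z ∈ nonunits ℤ_[p] := by
    rw [← IsLocalRing.mem_maximalIdeal, ← PadicInt.ker_toZMod]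
    exact hz
  rw [← zpow_neg_one, Padic.norm_le_pow_iff_norm_lt_pow_add_one]
  simpa using PadicInt.mem_nonunits.mp hz'

end HasResidue

end Padic

open Padic

namespace ZMod

variable {p : ℕ} [Fact p.Prime]

theorem sum_Icc_neg_one_pow_mul_choose_div {m j : ℕ} (hmj : m ≤ j) (hjp : j + m + 1 < p) :
    ∑ t ∈ Icc m j, (-1 : ZMod p) ^ (j - t) * ((j.choose t * t.choose m : ℕ) : ZMod p) /
        (((t + m + 1) * (t + m).choose m : ℕ) : ZMod p) =
      (-1) ^ (j - m) * (j.choose m : ZMod p) /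
        (((j + 1) * (m + j + 1).choose (j + 1) : ℕ) : ZMod p) := by
  have hden {n c b : ℕ} (hn : n + 1 < p) (hb : b ≤ c) (hc : c < p) :
      (((n + 1) * c.choose b : ℕ) : ZMod p) ≠ 0 := by
    rw [Nat.cast_mul]
    exact mul_ne_zero (natCast_ne_zero_of_pos_of_lt (by omega) hn) (natCast_choose_ne_zero hb hc)
  have hlhs : HasResidue
      (∑ t ∈ Icc m j, (-1 : ℚ_[p]) ^ (j - t) * ((j.choose t * t.choose m : ℕ) : ℚ_[p]) /
        (((t + m + 1) * (t + m).choose m : ℕ) : ℚ_[p]))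
      (∑ t ∈ Icc m j, (-1 : ZMod p) ^ (j - t) * ((j.choose t * t.choose m : ℕ) : ZMod p) /
        (((t + m + 1) * (t + m).choose m : ℕ) : ZMod p)) :=
    HasResidue.sum fun t ht => HasResidue.neg_one_pow_mul_natCast_div _ _ _ <|
      have := mem_Icc.mp ht
      hden (by omega) (by omega) (by omega)
  have hrhs := HasResidue.neg_one_pow_mul_natCast_div (p := p) (j - m) (j.choose m)
    ((j + 1) * (m + j + 1).choose (j + 1)) (hden (by omega) (by omega) (by omega))
  rw [_root_.sum_Icc_neg_one_pow_mul_choose_div hmj] at hlhs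
  exact hlhs.unique hrhs

theorem sum_Icc_choose_div_eq {m j : ℕ} (hmj : m ≤ j) (hjp : j + m + 2 ≤ p) :
    ∑ k ∈ Icc (p - 1 - j) (p - m - 1),
        ((m + k).choose k : ZMod p) * (k.choose (p - 1 - j) : ZMod p) /
          (((k : ZMod p) - m) * (k.choose m : ZMod p)) =
      (-1) ^ j * ((p - m - 1).choose (j - m) : ZMod p) /
        (((j : ZMod p) + 1) * ((p - m - 1).choose (j + 1) : ZMod p)) := by
  have hreflect : ∀ t ∈ Icc m j,
      ((m + (p - 1 - t)).choose (p - 1 - t) : ZMod p) *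
          ((p - 1 - t).choose (p - 1 - j) : ZMod p) /
            ((((p - 1 - t : ℕ) : ZMod p) - m) * ((p - 1 - t).choose m : ZMod p)) =
        -((-1 : ZMod p) ^ (j - t) * ((j.choose t * t.choose m : ℕ) : ZMod p) /
          (((t + m + 1) * (t + m).choose m : ℕ) : ZMod p)) := by
    intro t ht
    rw [mem_Icc] at ht
    have h1 : ((m + (p - 1 - t)).choose (p - 1 - t) : ZMod p) = (-1) ^ m * (t.choose m : ℕ) := by
      rw [← Nat.choose_symm_add, show m + (p - 1 - t) = p - 1 - (t - m) by omega,
        natCast_choose_sub_one_sub (by omega), Nat.sub_add_cancel ht.1]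
    have h2 : ((p - 1 - t).choose (p - 1 - j) : ZMod p) = (-1) ^ (j - t) * (j.choose t : ℕ) := by
      rw [Nat.choose_symm_of_eq_add (show p - 1 - t = (p - 1 - j) + (j - t) by omega),
        natCast_choose_sub_one_sub (by omega), Nat.add_sub_cancel' ht.2,
        Nat.choose_symm ht.2]
    have h3 : ((p - 1 - t : ℕ) : ZMod p) - m = -((t + m + 1 : ℕ) : ZMod p) := by
      rw [Nat.cast_sub (by omega), Nat.cast_sub (by omega), natCast_self]
      push_cast
      ring
    have h4 : ((p - 1 - t).choose m : ZMod p) = (-1) ^ m * ((t + m).choose m : ℕ) :=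
      natCast_choose_sub_one_sub (by omega)
    have hne : ((t + m + 1 : ℕ) : ZMod p) ≠ 0 := natCast_ne_zero_of_pos_of_lt (by omega) (by omega)
    have hne' : ((t + m).choose m : ZMod p) ≠ 0 := natCast_choose_ne_zero (by omega) (by omega)
    rw [h1, h2, h3, h4, Nat.cast_mul, Nat.cast_mul]
    field_simp
  have hne : ((j : ZMod p) + 1) ≠ 0 := by
    exact_mod_cast natCast_ne_zero_of_pos_of_lt (n := j + 1) (by omega) (by omega)
  have hne' : ((m + j + 1).choose (j + 1) : ZMod p) ≠ 0 :=
    natCast_choose_ne_zero (by omega) (by omega)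
  calc _ = ∑ t ∈ Icc m j, -((-1 : ZMod p) ^ (j - t) * ((j.choose t * t.choose m : ℕ) : ZMod p) /
          (((t + m + 1) * (t + m).choose m : ℕ) : ZMod p)) := by
        refine (sum_nbij' (fun t => p - 1 - t) (fun k => p - 1 - k) ?_ ?_ ?_ ?_
          fun t ht => (hreflect t ht).symm).symm <;>
        · intro t ht
          simp only [mem_Icc] at ht ⊢
          omega
    _ = -((-1) ^ (j - m) * (j.choose m : ZMod p) /
          (((j + 1) * (m + j + 1).choose (j + 1) : ℕ) : ZMod p)) := by
        rw [sum_neg_distrib, sum_Icc_neg_one_pow_mul_choose_div hmj (by omega)]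
    _ = _ := by
      rw [show p - m - 1 = p - 1 - m by omega, natCast_choose_sub_one_sub (by omega),
        natCast_choose_sub_one_sub (by omega), Nat.add_sub_cancel' hmj, Nat.choose_symm hmj,
        ← add_assoc, Nat.cast_mul]
      push_cast
      field_simp
      ring

end ZMod

theorem stmt17_general (p : ℕ) [Fact p.Prime] (m : ℕ)
    (j : ℕ) (hj1 : m + 1 ≤ j) (hj2 : j ≤ p - m - 2) :
    ‖(((∑ k ∈ Finset.Icc (p - 1 - j) (p - m - 1),
            ((m + k).choose k : ℚ) * (k.choose (p - 1 - j) : ℚ) /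
              (((k : ℚ) - (m : ℚ)) * (k.choose m : ℚ))) -
          (-1 : ℚ) ^ j * ((p - m - 1).choose (j - m) : ℚ) /
            (((j : ℚ) + 1) * ((p - m - 1).choose (j + 1) : ℚ)) : ℚ) : ℚ_[p])‖
      ≤ (p : ℝ)⁻¹ := by
  have hjp : j + m + 2 ≤ p := by omega
  have key := ZMod.sum_Icc_choose_div_eq (by omega) hjp
  rw [← sub_eq_zero] at key
  apply HasResidue.norm_le_inv
  push_cast
  rw [← key]
  refine (HasResidue.sum fun k hk => ?_).sub ?_
  · have hk := mem_Icc.mp hk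
    refine ((HasResidue.natCast _).mul (HasResidue.natCast _)).div
      (((HasResidue.natCast k).sub (HasResidue.natCast m)).mul (HasResidue.natCast _)) ?_
    rw [← Nat.cast_sub (by omega)]
    exact mul_ne_zero (ZMod.natCast_ne_zero_of_pos_of_lt (by omega) (by omega))
      (ZMod.natCast_choose_ne_zero (by omega) (by omega))
  · refine ((HasResidue.one.neg.pow j).mul (HasResidue.natCast _)).div
      (((HasResidue.natCast j).add HasResidue.one).mul (HasResidue.natCast _)) ?_
    exact mul_ne_zero
      (mod_cast ZMod.natCast_ne_zero_of_pos_of_lt (n := j + 1) (by omega) (by omega))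
      (ZMod.natCast_choose_ne_zero (by omega) (by omega))

/-- Let `p` be an odd prime and `m < (p-1)/2` a nonnegative integer. For every
`m + 1 ≤ j ≤ p - m - 2`,
`∑_{k=p-1-j}^{p-m-1} C(m+k,k) C(k,p-1-j) / ((k-m) C(k,m))
  ≡ (-1)^j C(p-m-1,j-m) / ((j+1) C(p-m-1,j+1)) (mod p)`
as a congruence of `p`-integral rationals. -/
theorem stmt17 (p : ℕ) [Fact p.Prime] (hp : Odd p) (m : ℕ) (hm : m < (p - 1) / 2)
    (j : ℕ) (hj1 : m + 1 ≤ j) (hj2 : j ≤ p - m - 2) :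
    ‖(((∑ k ∈ Finset.Icc (p - 1 - j) (p - m - 1),
            ((m + k).choose k : ℚ) * (k.choose (p - 1 - j) : ℚ) /
              (((k : ℚ) - (m : ℚ)) * (k.choose m : ℚ))) -
          (-1 : ℚ) ^ j * ((p - m - 1).choose (j - m) : ℚ) /
            (((j : ℚ) + 1) * ((p - m - 1).choose (j + 1) : ℚ)) : ℚ) : ℚ_[p])‖
      ≤ (p : ℝ)⁻¹ :=
  stmt17_general p m j hj1 hj2
end
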